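/- With HD(Y) the Hodge–Deligne polynomial of a smooth cubic fourfold (h^{1,1}(Y)=1, h^{3,1}(Y)=h^{1,3}(Y)=1, h^{2,2}(Y)=21, h^{0,0}=h^{4,4}=1, odd cohomology zero), define P := HD(Σ) + (1 + uv + 2u²v² + u³v³ + u⁴v⁴)·HD(Y) − (1 + uv)·(1 + uv + u²v² + u³v³)·HD(Y), where HD(Σ) = Σ_{i=0}^{8}(uv)^i + (Σ_{i=1}^{5}(uv)^i)·HD(S) + (uv)²·HD(S^[2]) with HD(S), HD(S^[2]) as for a K3 surface and its Hilbert square. Then P has only even-degree terms, and its coefficients give h^{4,4} = 253, h^{5,3} = h^{3,5} = 22, h^{6,2} = h^{2,6} = 1, h^{3,3} = 22, h^{4,2} = h^{2,4} = 1, h^{2,2} = 22, h^{3,1} = h^{1,3} = 1, h^{1,1} = 1, h^{0,0} = h^{8,8} = 1 (and the pattern is symmetric under (p,q) ↦ (8-p, 8-q)). -/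
import Mathlib


open MvPolynomial

namespace Stmt16

noncomputable def u : MvPolynomial (Fin 2) ℤ := X 0
noncomputable def v : MvPolynomial (Fin 2) ℤ := X 1

/-- `L = uv`, the Hodge–Deligne polynomial of the affine line. -/
noncomputable def L : MvPolynomial (Fin 2) ℤ := u * v

/-- Hodge–Deligne polynomial of a K3 surface. -/
noncomputable def HDS : MvPolynomial (Fin 2) ℤ :=
  1 + u ^ 2 + v ^ 2 + 20 * (u * v) + u ^ 2 * v ^ 2

/-- Hodge–Deligne polynomial of the Hilbert square of a K3 surface. -/
noncomputable def HDS2 : MvPolynomial (Fin 2) ℤ :=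
  1 + 21 * (u * v) + u ^ 2 + v ^ 2
    + u ^ 4 + v ^ 4 + 21 * (u ^ 3 * v) + 21 * (u * v ^ 3) + 232 * (u ^ 2 * v ^ 2)
    + u ^ 4 * v ^ 2 + u ^ 2 * v ^ 4 + 21 * (u ^ 3 * v ^ 3) + u ^ 4 * v ^ 4

/-- Hodge–Deligne polynomial of a smooth cubic fourfold `Y`
(`h^{0,0} = h^{1,1} = h^{3,1} = h^{1,3} = h^{3,3} = h^{4,4} = 1`, `h^{2,2} = 21`,
odd cohomology zero). -/
noncomputable def HDY : MvPolynomial (Fin 2) ℤ :=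
  1 + u * v + u ^ 3 * v + 21 * (u ^ 2 * v ^ 2) + u * v ^ 3 + u ^ 3 * v ^ 3
    + u ^ 4 * v ^ 4

/-- `HD(Σ)` as in the Grothendieck-ring identity
`[Σ] = Σ_{i=0}^{8} L^i + (Σ_{i=1}^{5} L^i)·[S] + L²·[S^[2]]`. -/
noncomputable def HDSigma : MvPolynomial (Fin 2) ℤ :=
  (∑ i ∈ Finset.range 9, L ^ i) + (∑ i ∈ Finset.Icc 1 5, L ^ i) * HDS + L ^ 2 * HDS2

/-- The motivic-nearby-cycle Hodge–Deligne polynomial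
`P = HD(Σ) + (1 + L + 2L² + L³ + L⁴)·HD(Y) − (1 + L)·(1 + L + L² + L³)·HD(Y)`. -/
noncomputable def P : MvPolynomial (Fin 2) ℤ :=
  HDSigma + (1 + L + 2 * L ^ 2 + L ^ 3 + L ^ 4) * HDY
    - (1 + L) * (1 + L + L ^ 2 + L ^ 3) * HDY

/-- The coefficient of `u^p v^q`. -/
noncomputable def cf (p q : ℕ) (Q : MvPolynomial (Fin 2) ℤ) : ℤ :=
  MvPolynomial.coeff (Finsupp.single 0 p + Finsupp.single 1 q) Q


noncomputable def M (a b : ℕ) (c : ℤ) : MvPolynomial (Fin 2) ℤ :=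
  monomial (Finsupp.single 0 a + Finsupp.single 1 b) c

lemma M_eq (a b : ℕ) (c : ℤ) : M a b c = C c * u ^ a * v ^ b := by
  rw [M, u, v, monomial_single_add, ← add_zero (Finsupp.single 1 b), monomial_single_add,
    monomial_zero']
  ring

lemma hIcc : (∑ i ∈ Finset.Icc 1 5, (u * v) ^ i) =
    u * v + (u*v)^2 + (u*v)^3 + (u*v)^4 + (u*v)^5 := by
  simp [Finset.sum_Icc_succ_top, Finset.Icc_self]

lemma hPm : P =
    M 0 0 1 + M 1 1 1 + M 1 3 1 + M 2 2 22 + M 2 4 1 + M 2 6 1 + M 3 1 1 + M 3 3 22 +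
    M 3 5 22 + M 4 2 1 + M 4 4 253 + M 4 6 1 + M 5 3 22 + M 5 5 22 + M 5 7 1 + M 6 2 1 +
    M 6 4 1 + M 6 6 22 + M 7 5 1 + M 7 7 1 + M 8 8 1 := by
  simp only [P, HDSigma, HDS, HDS2, HDY, M_eq, Finset.sum_range_succ, Finset.sum_range_zero,
    map_ofNat, map_one, L, hIcc]
  ring

lemma cf_add (p q : ℕ) (A B : MvPolynomial (Fin 2) ℤ) :
    cf p q (A + B) = cf p q A + cf p q B := coeff_add _ _ _

lemma cf_M (p q a b : ℕ) (c : ℤ) :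
    cf p q (M a b c) = if a = p ∧ b = q then c else 0 := by
  rw [cf, M, coeff_monomial]
  by_cases h : a = p ∧ b = q
  · obtain ⟨rfl, rfl⟩ := h; simp
  · rw [if_neg h, if_neg]
    intro he
    apply h
    have h0 := DFunLike.congr_fun he 0
    have h1 := DFunLike.congr_fun he 1
    simp [Finsupp.single_apply] at h0 h1
    exact ⟨h0, h1⟩

lemma coeff_M_odd (a b : ℕ) (c : ℤ) (d : Fin 2 →₀ ℕ) (hd : (d 0 + d 1) % 2 = 1)
    (hab : (a + b) % 2 = 0) : MvPolynomial.coeff d (M a b c) = 0 := by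
  rw [M, coeff_monomial, if_neg]
  intro he
  have h0 := DFunLike.congr_fun he 0
  have h1 := DFunLike.congr_fun he 1
  simp [Finsupp.single_apply] at h0 h1
  omega

/-- `P` has only even-degree terms, its coefficients give the Hodge
numbers `h^{4,4} = 253`, `h^{5,3} = h^{3,5} = 22`, `h^{6,2} = h^{2,6} = 1`,
`h^{3,3} = 22`, `h^{4,2} = h^{2,4} = 1`, `h^{2,2} = 22`, `h^{3,1} = h^{1,3} = 1`,
`h^{1,1} = 1`, `h^{0,0} = h^{8,8} = 1`, and the coefficients are symmetric under
`(p,q) ↦ (8-p, 8-q)`. -/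
theorem stmt16 :
    (∀ d : Fin 2 →₀ ℕ, Odd (d 0 + d 1) → MvPolynomial.coeff d P = 0) ∧
    cf 4 4 P = 253 ∧ cf 5 3 P = 22 ∧ cf 3 5 P = 22 ∧ cf 6 2 P = 1 ∧ cf 2 6 P = 1 ∧
    cf 3 3 P = 22 ∧ cf 4 2 P = 1 ∧ cf 2 4 P = 1 ∧
    cf 2 2 P = 22 ∧ cf 3 1 P = 1 ∧ cf 1 3 P = 1 ∧
    cf 1 1 P = 1 ∧ cf 0 0 P = 1 ∧ cf 8 8 P = 1 ∧
    (∀ p q : ℕ, p ≤ 8 → q ≤ 8 → cf p q P = cf (8 - p) (8 - q) P) := by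
  refine ⟨?_, ?_, ?_, ?_, ?_, ?_, ?_, ?_, ?_, ?_, ?_, ?_, ?_, ?_, ?_, ?_⟩
  · intro d hd
    rw [Nat.odd_iff] at hd
    rw [hPm]
    simp only [coeff_add, coeff_M_odd (hd := hd)]
    norm_num
  all_goals try simp [hPm, cf_add, cf_M]
  intro p q hp hq
  interval_cases p <;> interval_cases q <;> simp [hPm, cf_add, cf_M]

end Stmt16
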